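/- Let F, G : ℝ × ℝ → ℝ be continuous, Lipschitz in y, with F(x,y) < G(x,y) everywhere. Let y solve y' = F (an α-profile) and z solve z' = G (a β-profile) with y(c) = z(c) at a point c. Then for any x₁ < c < x₂ in the common domain, z(x₁) < y(x₁) and z(x₂) > y(x₂), and moreover c is the unique intersection point of y and z in the common domain. -/

import Mathlib

/-!
At every point where `y` and `z` meet, `z - y` has derivative `G - F > 0`, so `z - y` can
only cross zero upwards. Mathlib's fencing theorem keeps `y ≤ z` to the right of any point
where `y ≤ z`, and a later touching point is impossible because just to its left `z - y` would
have to be negative. Applied from `c` in both directions this gives the two sign statements,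
and uniqueness follows by trichotomy.
-/

open Filter Set Topology

theorem HasDerivAt.eventually_nhdsLT_lt {f : ℝ → ℝ} {f' t : ℝ} (hf : HasDerivAt f f' t)
    (hpos : 0 < f') : ∀ᶠ s in 𝓝[<] t, f s < f t := by
  have hslope : ∀ᶠ s in 𝓝[<] t, 0 < slope f t s :=
    (hasDerivAt_iff_tendsto_slope_left_right.mp hf).1.eventually (eventually_gt_nhds hpos)
  filter_upwards [hslope, self_mem_nhdsWithin] with s hs hst
  rwa [slope_comm, slope_pos_iff_of_le hst.le] at hs

theorem image_lt_of_deriv_lt_deriv_boundary {f f' B B' : ℝ → ℝ}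
    (hf : ∀ x, HasDerivAt f (f' x) x) (hB : ∀ x, HasDerivAt B (B' x) x)
    (bound : ∀ x, f x = B x → f' x < B' x) {a b : ℝ} (ha : f a ≤ B a) (hab : a < b) :
    f b < B b := by
  have hle : ∀ x ∈ Icc a b, f x ≤ B x :=
    image_le_of_deriv_right_lt_deriv_boundary
      (fun x _ => (hf x).continuousAt.continuousWithinAt) (fun x _ => (hf x).hasDerivWithinAt)
      ha hB (fun x _ => bound x)
  refine (hle b ⟨hab.le, le_rfl⟩).lt_of_ne fun heq => ?_
  have hgap : ∀ᶠ s in 𝓝[<] b, B s - f s < B b - f b :=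
    ((hB b).sub (hf b)).eventually_nhdsLT_lt (sub_pos.mpr (bound b heq))
  obtain ⟨s, hs, hsab⟩ := (hgap.and (Ioo_mem_nhdsLT hab)).exists
  linarith [hle s (Ioo_subset_Icc_self hsab)]

theorem alpha_beta_unique_intersection_general
    (F G : ℝ → ℝ → ℝ)
    (hFG : ∀ x y : ℝ, F x y < G x y)
    (y z : ℝ → ℝ)
    (hy : ∀ x, HasDerivAt y (F x (y x)) x)
    (hz : ∀ x, HasDerivAt z (G x (z x)) x)
    (c : ℝ) (hc : y c = z c) :
    (∀ x₁, x₁ < c → z x₁ < y x₁) ∧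
    (∀ x₂, c < x₂ → y x₂ < z x₂) ∧
    (∀ x, y x = z x → x = c) := by
  have bound : ∀ x, y x = z x → F x (y x) < G x (z x) := fun x hx => by
    rw [← hx]
    exact hFG x (y x)
  have hafter : ∀ x₂, c < x₂ → y x₂ < z x₂ := fun x₂ hcx =>
    image_lt_of_deriv_lt_deriv_boundary hy hz bound hc.le hcx
  have hbefore : ∀ x₁, x₁ < c → z x₁ < y x₁ := fun x₁ hxc =>
    lt_of_not_ge fun hle => (image_lt_of_deriv_lt_deriv_boundary hy hz bound hle hxc).ne hc
  refine ⟨hbefore, hafter, fun x hx => ?_⟩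
  rcases lt_trichotomy x c with hxc | hxc | hcx
  · exact absurd hx (hbefore x hxc).ne'
  · exact hxc
  · exact absurd hx (hafter x hcx).ne

/-- Uniqueness of the intersection of an α-profile with a β-profile where `F < G`
strictly: if `y' = F(x,y)`, `z' = G(x,z)`, both sides continuous and Lipschitz in the
second variable, and `y c = z c`, then `z < y` before `c`, `z > y` after `c`, and `c`
is the only intersection point. -/
theorem alpha_beta_unique_intersection
    (F G : ℝ → ℝ → ℝ)
    (hFcont : Continuous (Function.uncurry F))
    (hGcont : Continuous (Function.uncurry G))
    (K : NNReal)
    (hFlip : ∀ x, LipschitzWith K (F x))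
    (hGlip : ∀ x, LipschitzWith K (G x))
    (hFG : ∀ x y : ℝ, F x y < G x y)
    (y z : ℝ → ℝ)
    (hy : ∀ x, HasDerivAt y (F x (y x)) x)
    (hz : ∀ x, HasDerivAt z (G x (z x)) x)
    (c : ℝ) (hc : y c = z c) :
    (∀ x₁, x₁ < c → z x₁ < y x₁) ∧
    (∀ x₂, c < x₂ → y x₂ < z x₂) ∧
    (∀ x, y x = z x → x = c) :=
  alpha_beta_unique_intersection_general F G hFG y z hy hz c hc
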